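/- Let 0 < α ≤ 1, K > 0, η > 0, j₀ ∈ ℕ, and let f ∈ Σ(α,K) be self-similar in the sense that for every j ≥ j₀, sup_{x ∈ [0,1)} |f(x) − 2^j ∫_{I_{j,⌊2^j x⌋}} f(t) dt| ≥ η 2^{−jα}. Then there exists a constant C > 0, depending only on α, K and η, such that for every j ≥ j₀, sup over all pairs (l,k) with l ≥ j and 0 ≤ k < 2^l of |∫₀¹ f ψ_{l,k}| ≥ C * 2^{−j(α + 1/2)}. -/

import Mathlib

/-!
Write `A_l f (x) = 2^l ∫_{I_{l,⌊2^l x⌋}} f` for the dyadic averages of `f`. On `I_{l,k}`,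
`A_{l+1} f - A_l f` equals `± 2^{l/2} ⟨f, ψ_{l,k}⟩`, while the Hölder condition gives
`|f - A_l f| ≤ K 2^{-lα}`. Telescoping from `j` to `j + M`, where `M` is chosen with
`K 2^{-Mα} < η/2`, bounds `|f - A_j f|` by `η/2 · 2^{-jα} + M 2^{(j+M)/2} S`, with `S` the
supremum of the Haar coefficients of level `≥ j`. Comparing with the self-similarity lower bound
`η 2^{-jα}` gives `S ≥ η / (2 M 2^{M/2}) · 2^{-j(α+1/2)}`.
-/

open MeasureTheory

/-- The dyadic interval `I_{l,k} = [k 2^{-l}, (k+1) 2^{-l})`. -/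
def dyadicI (l k : ℕ) : Set ℝ := Set.Ico ((k : ℝ) / 2 ^ l) (((k : ℝ) + 1) / 2 ^ l)

/-- The Haar wavelet `ψ_{l,k}(x) = 2^{l/2} (1_{[1/2,1)} - 1_{[0,1/2)})(2^l x - k)`. -/
noncomputable def haar (l k : ℕ) (x : ℝ) : ℝ :=
  2 ^ ((l : ℝ) / 2) *
    ((Set.Ico (1 / 2 : ℝ) 1).indicator 1 (2 ^ l * x - k) -
     (Set.Ico (0 : ℝ) (1 / 2 : ℝ)).indicator 1 (2 ^ l * x - k))

open Set Filter Topology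

lemma dyadicI_subset_Ico {l k : ℕ} (hk : k < 2 ^ l) : dyadicI l k ⊆ Ico (0 : ℝ) 1 := by
  have hk' : (k : ℝ) + 1 ≤ 2 ^ l := by exact_mod_cast hk
  refine Ico_subset_Ico ?_ ((div_le_one (by positivity : (0 : ℝ) < 2 ^ l)).2 hk')
  positivity

lemma measurableSet_dyadicI (l k : ℕ) : MeasurableSet (dyadicI l k) := measurableSet_Ico

lemma volume_dyadicI_lt_top (l k : ℕ) : volume (dyadicI l k) < ⊤ := measure_Ico_lt_top

lemma volume_real_dyadicI (l k : ℕ) : volume.real (dyadicI l k) = ((2 : ℝ) ^ l)⁻¹ := by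
  have h : ((k : ℝ) + 1) / 2 ^ l - k / 2 ^ l = ((2 : ℝ) ^ l)⁻¹ := by field_simp; ring
  rw [dyadicI, Real.volume_real_Ico, h, max_eq_left (by positivity)]

lemma mem_dyadicI_floor (l : ℕ) {x : ℝ} (hx : 0 ≤ x) : x ∈ dyadicI l ⌊2 ^ l * x⌋₊ := by
  have h0 : (0 : ℝ) ≤ 2 ^ l * x := by positivity
  constructor
  · rw [div_le_iff₀ (by positivity)]
    linarith [Nat.floor_le h0]
  · rw [lt_div_iff₀ (by positivity)]
    linarith [Nat.lt_floor_add_one (2 ^ l * x)]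

lemma floor_two_pow_mul_lt {l : ℕ} {x : ℝ} (hx : x ∈ Ico (0 : ℝ) 1) : ⌊2 ^ l * x⌋₊ < 2 ^ l := by
  rw [Nat.floor_lt (by have := hx.1; positivity)]
  push_cast
  nlinarith [hx.2, pow_pos (two_pos : (0 : ℝ) < 2) l]

lemma abs_sub_le_of_mem_dyadicI {l k : ℕ} {x y : ℝ} (hx : x ∈ dyadicI l k)
    (hy : y ∈ dyadicI l k) : |x - y| ≤ ((2 : ℝ) ^ l)⁻¹ := by
  have h : ((k : ℝ) + 1) / 2 ^ l - k / 2 ^ l = ((2 : ℝ) ^ l)⁻¹ := by field_simp; ring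
  rw [abs_sub_le_iff]
  constructor <;> linarith [hx.1, hx.2, hy.1, hy.2]

lemma floor_two_pow_succ_mul (l : ℕ) (x : ℝ) :
    ⌊2 ^ (l + 1) * x⌋₊ = 2 * ⌊2 ^ l * x⌋₊ ∨ ⌊2 ^ (l + 1) * x⌋₊ = 2 * ⌊2 ^ l * x⌋₊ + 1 := by
  have h : ⌊2 ^ l * x⌋₊ = ⌊2 ^ (l + 1) * x⌋₊ / 2 := by
    rw [← Nat.floor_div_natCast]
    congr 1
    push_cast
    ring
  omega

lemma dyadicI_eq_union (l k : ℕ) :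
    dyadicI l k = dyadicI (l + 1) (2 * k) ∪ dyadicI (l + 1) (2 * k + 1) := by
  have h2 : (0 : ℝ) < 2 ^ l := by positivity
  simp only [dyadicI, pow_succ, Nat.cast_add, Nat.cast_mul, Nat.cast_ofNat, Nat.cast_one]
  rw [Ico_union_Ico_eq_Ico]
  · congr 1
    · field_simp
    · field_simp
      ring
  all_goals
    rw [div_le_div_iff₀ (by positivity) (by positivity)]
    nlinarith

lemma disjoint_dyadicI_succ (l k : ℕ) :
    Disjoint (dyadicI (l + 1) (2 * k)) (dyadicI (l + 1) (2 * k + 1)) := by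
  rw [dyadicI, dyadicI]
  push_cast
  exact Ico_disjoint_Ico_same

section Haar

variable {f : ℝ → ℝ}

lemma two_pow_mul_sub_mem_Ico_iff (l k a : ℕ) (t : ℝ) :
    2 ^ l * t - k ∈ Ico ((a : ℝ) / 2) ((a + 1) / 2) ↔ t ∈ dyadicI (l + 1) (2 * k + a) := by
  have h2 : (0 : ℝ) < 2 ^ l := by positivity
  simp only [dyadicI, mem_Ico, pow_succ, Nat.cast_add, Nat.cast_mul, Nat.cast_ofNat]
  rw [div_le_iff₀ two_pos, lt_div_iff₀ two_pos, div_le_iff₀ (by positivity),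
    lt_div_iff₀ (by positivity)]
  constructor <;> rintro ⟨h₁, h₂⟩ <;> constructor <;> nlinarith

lemma mul_haar (l k : ℕ) (t : ℝ) :
    f t * haar l k t = 2 ^ ((l : ℝ) / 2) *
      ((dyadicI (l + 1) (2 * k + 1)).indicator f t - (dyadicI (l + 1) (2 * k)).indicator f t) := by
  have hright : 2 ^ l * t - k ∈ Ico (1 / 2 : ℝ) 1 ↔ t ∈ dyadicI (l + 1) (2 * k + 1) := by
    simpa using two_pow_mul_sub_mem_Ico_iff l k 1 t
  have hleft : 2 ^ l * t - k ∈ Ico (0 : ℝ) (1 / 2) ↔ t ∈ dyadicI (l + 1) (2 * k) := by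
    simpa using two_pow_mul_sub_mem_Ico_iff l k 0 t
  classical
  simp only [haar, indicator_apply, Pi.one_apply, hright, hleft]
  split_ifs <;> ring

lemma integral_mul_haar (hf : IntegrableOn f (Ico 0 1)) {l k : ℕ} (hk : k < 2 ^ l) :
    ∫ t in Ico 0 1, f t * haar l k t = 2 ^ ((l : ℝ) / 2) *
      ((∫ t in dyadicI (l + 1) (2 * k + 1), f t) - ∫ t in dyadicI (l + 1) (2 * k), f t) := by
  have hsub₀ : dyadicI (l + 1) (2 * k) ⊆ Ico 0 1 := dyadicI_subset_Ico (by rw [pow_succ]; omega)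
  have hsub₁ : dyadicI (l + 1) (2 * k + 1) ⊆ Ico 0 1 :=
    dyadicI_subset_Ico (by rw [pow_succ]; omega)
  simp_rw [mul_haar l k]
  rw [integral_const_mul, integral_sub (hf.indicator (measurableSet_dyadicI _ _))
    (hf.indicator (measurableSet_dyadicI _ _)), integral_indicator (measurableSet_dyadicI _ _),
    integral_indicator (measurableSet_dyadicI _ _),
    Measure.restrict_restrict (measurableSet_dyadicI _ _),
    Measure.restrict_restrict (measurableSet_dyadicI _ _),
    inter_eq_self_of_subset_left hsub₀, inter_eq_self_of_subset_left hsub₁]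

lemma setIntegral_dyadicI (hf : IntegrableOn f (Ico 0 1)) {l k : ℕ} (hk : k < 2 ^ l) :
    ∫ t in dyadicI l k, f t =
      (∫ t in dyadicI (l + 1) (2 * k), f t) + ∫ t in dyadicI (l + 1) (2 * k + 1), f t := by
  rw [dyadicI_eq_union, setIntegral_union (disjoint_dyadicI_succ l k) (measurableSet_dyadicI _ _)
    (hf.mono_set (dyadicI_subset_Ico (by rw [pow_succ]; omega)))
    (hf.mono_set (dyadicI_subset_Ico (by rw [pow_succ]; omega)))]

end Haar

section DyadicAverage

noncomputable def dyadicAverage (f : ℝ → ℝ) (l : ℕ) (x : ℝ) : ℝ :=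
  2 ^ l * ∫ t in dyadicI l ⌊2 ^ l * x⌋₊, f t

variable {f : ℝ → ℝ}

lemma abs_dyadicAverage_succ_sub (hf : IntegrableOn f (Ico 0 1)) (l : ℕ) {x : ℝ}
    (hx : x ∈ Ico (0 : ℝ) 1) :
    |dyadicAverage f (l + 1) x - dyadicAverage f l x| =
      2 ^ ((l : ℝ) / 2) * |∫ t in Ico 0 1, f t * haar l ⌊2 ^ l * x⌋₊ t| := by
  have hk := floor_two_pow_mul_lt (l := l) hx
  have hsq : (2 : ℝ) ^ ((l : ℝ) / 2) * 2 ^ ((l : ℝ) / 2) = 2 ^ l := by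
    rw [← Real.rpow_add two_pos, add_halves, Real.rpow_natCast]
  rw [integral_mul_haar hf hk, abs_mul, abs_of_pos (by positivity : (0 : ℝ) < 2 ^ ((l : ℝ) / 2)),
    ← mul_assoc, hsq, dyadicAverage, dyadicAverage, setIntegral_dyadicI hf hk]
  set L := ∫ t in dyadicI (l + 1) (2 * ⌊2 ^ l * x⌋₊), f t
  set R := ∫ t in dyadicI (l + 1) (2 * ⌊2 ^ l * x⌋₊ + 1), f t
  rcases floor_two_pow_succ_mul l x with h | h <;> rw [h, pow_succ]
  · rw [show 2 ^ l * 2 * L - 2 ^ l * (L + R) = -(2 ^ l * (R - L)) by ring, abs_neg, abs_mul,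
      abs_of_pos (by positivity)]
  · rw [show 2 ^ l * 2 * R - 2 ^ l * (L + R) = 2 ^ l * (R - L) by ring, abs_mul,
      abs_of_pos (by positivity)]

lemma abs_dyadicAverage_add_sub_le (hf : IntegrableOn f (Ico 0 1)) (j n : ℕ) {x : ℝ}
    (hx : x ∈ Ico (0 : ℝ) 1) :
    |dyadicAverage f (j + n) x - dyadicAverage f j x| ≤ ∑ i ∈ Finset.range n,
      2 ^ (((j + i : ℕ) : ℝ) / 2) * |∫ t in Ico 0 1, f t * haar (j + i) ⌊2 ^ (j + i) * x⌋₊ t| := by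
  rw [abs_sub_comm]
  refine (dist_le_range_sum_dist (fun i ↦ dyadicAverage f (j + i) x) n).trans_eq ?_
  refine Finset.sum_congr rfl fun i _ ↦ ?_
  rw [Real.dist_eq, abs_sub_comm]
  exact abs_dyadicAverage_succ_sub hf (j + i) hx

end DyadicAverage

/-- `f ∈ Σ(α, K)`. -/
def MemHolderClass (α K : ℝ) (f : ℝ → ℝ) : Prop :=
  ∀ x ∈ Ico (0 : ℝ) 1, ∀ y ∈ Ico (0 : ℝ) 1, |f x - f y| ≤ K * |x - y| ^ α

namespace MemHolderClass

variable {α K : ℝ} {f : ℝ → ℝ}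

lemma continuousOn (hf : MemHolderClass α K f) (hα : 0 < α) : ContinuousOn f (Ico 0 1) := by
  intro x hx
  have hlim : Tendsto (fun y ↦ K * |y - x| ^ α) (𝓝[Ico 0 1] x) (𝓝 0) := by
    have : ContinuousAt (fun y ↦ K * |y - x| ^ α) x :=
      continuousAt_const.mul ((Real.continuousAt_rpow_const _ _ (Or.inr hα.le)).comp
        (continuous_abs.comp (continuous_sub_right x)).continuousAt)
    simpa [Real.zero_rpow hα.ne'] using this.tendsto.mono_left nhdsWithin_le_nhds
  rw [ContinuousWithinAt, tendsto_iff_dist_tendsto_zero]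
  exact squeeze_zero' (Eventually.of_forall fun _ ↦ dist_nonneg)
    (eventually_nhdsWithin_of_forall fun y hy ↦ hf y hy x hx) hlim

lemma abs_le (hf : MemHolderClass α K f) (hα : 0 ≤ α) (hK : 0 ≤ K) {x : ℝ}
    (hx : x ∈ Ico (0 : ℝ) 1) : |f x| ≤ |f 0| + K := by
  have h₁ : |x - 0| ^ α ≤ 1 := by
    rw [sub_zero, abs_of_nonneg hx.1]
    exact Real.rpow_le_one hx.1 hx.2.le hα
  have h₂ := hf x hx 0 (left_mem_Ico.2 one_pos)
  nlinarith [abs_sub_abs_le_abs_sub (f x) (f 0)]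

lemma integrableOn (hf : MemHolderClass α K f) (hα : 0 < α) (hK : 0 ≤ K) :
    IntegrableOn f (Ico 0 1) :=
  IntegrableOn.of_bound (by simp) ((hf.continuousOn hα).aestronglyMeasurable measurableSet_Ico)
    (|f 0| + K) ((ae_restrict_iff' measurableSet_Ico).2 (Eventually.of_forall
      fun _ hx ↦ hf.abs_le hα.le hK hx))

lemma abs_sub_two_pow_mul_setIntegral_le (hf : MemHolderClass α K f) (hα : 0 < α)
    (hK : 0 ≤ K) {l k : ℕ} (hk : k < 2 ^ l) {x : ℝ} (hx : x ∈ dyadicI l k) :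
    |f x - 2 ^ l * ∫ t in dyadicI l k, f t| ≤ K * 2 ^ (-(l : ℝ) * α) := by
  have hI := dyadicI_subset_Ico hk
  have hpow : ((2 : ℝ) ^ l)⁻¹ ^ α = 2 ^ (-(l : ℝ) * α) := by
    rw [← Real.rpow_natCast, ← Real.rpow_neg zero_le_two, ← Real.rpow_mul zero_le_two]
  have heq : f x - 2 ^ l * ∫ t in dyadicI l k, f t = 2 ^ l * ∫ t in dyadicI l k, (f x - f t) := by
    rw [integral_sub (integrableOn_const (C := f x) (volume_dyadicI_lt_top l k).ne)
      ((hf.integrableOn hα hK).mono_set hI), setIntegral_const, volume_real_dyadicI, smul_eq_mul]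
    field_simp
  have hbound : ∀ t ∈ dyadicI l k, ‖f x - f t‖ ≤ K * 2 ^ (-(l : ℝ) * α) := fun t ht ↦ by
    rw [Real.norm_eq_abs, ← hpow]
    exact (hf x (hI hx) t (hI ht)).trans (mul_le_mul_of_nonneg_left
      (Real.rpow_le_rpow (abs_nonneg _) (abs_sub_le_of_mem_dyadicI hx ht) hα.le) hK)
  have hint := norm_setIntegral_le_of_norm_le_const (volume_dyadicI_lt_top l k) hbound
  rw [volume_real_dyadicI, Real.norm_eq_abs] at hint
  rw [heq, abs_mul, abs_of_pos (by positivity)]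
  calc (2 : ℝ) ^ l * |∫ t in dyadicI l k, (f x - f t)|
      ≤ 2 ^ l * (K * 2 ^ (-(l : ℝ) * α) * ((2 : ℝ) ^ l)⁻¹) := by gcongr
    _ = K * 2 ^ (-(l : ℝ) * α) := by field_simp

lemma abs_sub_dyadicAverage_le (hf : MemHolderClass α K f) (hα : 0 < α) (hK : 0 ≤ K) (l : ℕ)
    {x : ℝ} (hx : x ∈ Ico (0 : ℝ) 1) :
    |f x - dyadicAverage f l x| ≤ K * 2 ^ (-(l : ℝ) * α) :=
  hf.abs_sub_two_pow_mul_setIntegral_le hα hK (floor_two_pow_mul_lt hx) (mem_dyadicI_floor l hx.1)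

lemma abs_integral_mul_haar_le (hf : MemHolderClass α K f) (hα : 0 < α) (hK : 0 ≤ K) {l k : ℕ}
    (hk : k < 2 ^ l) : |∫ t in Ico 0 1, f t * haar l k t| ≤ 2 * K := by
  set x : ℝ := k / 2 ^ l
  have hx : x ∈ Ico (0 : ℝ) 1 := dyadicI_subset_Ico hk (left_mem_Ico.2 (by
    rw [div_lt_div_iff_of_pos_right (by positivity)]; linarith))
  have hfloor : ⌊2 ^ l * x⌋₊ = k := by
    rw [mul_div_cancel₀ _ (by positivity), Nat.floor_natCast]
  have hdecay : ∀ n : ℕ, K * (2 : ℝ) ^ (-(n : ℝ) * α) ≤ K := fun n ↦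
    mul_le_of_le_one_right hK (Real.rpow_le_one_of_one_le_of_nonpos one_le_two
      (by nlinarith [(Nat.cast_nonneg n : (0 : ℝ) ≤ n)]))
  have hstep := abs_dyadicAverage_succ_sub (hf.integrableOn hα hK) l hx
  rw [hfloor] at hstep
  have hone : (1 : ℝ) ≤ 2 ^ ((l : ℝ) / 2) := Real.one_le_rpow one_le_two (by positivity)
  calc |∫ t in Ico 0 1, f t * haar l k t|
      ≤ 2 ^ ((l : ℝ) / 2) * |∫ t in Ico 0 1, f t * haar l k t| :=
        le_mul_of_one_le_left (abs_nonneg _) hone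
    _ = |(dyadicAverage f (l + 1) x - f x) + (f x - dyadicAverage f l x)| := by
        rw [sub_add_sub_cancel, hstep]
    _ ≤ |f x - dyadicAverage f (l + 1) x| + |f x - dyadicAverage f l x| := by
        rw [abs_sub_comm (f x) (dyadicAverage f (l + 1) x)]; exact abs_add_le _ _
    _ ≤ K + K := add_le_add ((hf.abs_sub_dyadicAverage_le hα hK _ hx).trans (hdecay _))
        ((hf.abs_sub_dyadicAverage_le hα hK _ hx).trans (hdecay _))
    _ = 2 * K := by ring

lemma abs_sub_dyadicAverage_le_of_haar_le (hf : MemHolderClass α K f) (hα : 0 < α) (hK : 0 ≤ K)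
    {j : ℕ} {S : ℝ} (hS : ∀ l, j ≤ l → ∀ k < 2 ^ l, |∫ t in Ico 0 1, f t * haar l k t| ≤ S)
    (n : ℕ) {x : ℝ} (hx : x ∈ Ico (0 : ℝ) 1) :
    |f x - dyadicAverage f j x| ≤
      K * 2 ^ (-((j + n : ℕ) : ℝ) * α) + n * (2 ^ (((j + n : ℕ) : ℝ) / 2) * S) := by
  calc |f x - dyadicAverage f j x|
      ≤ |f x - dyadicAverage f (j + n) x| + |dyadicAverage f (j + n) x - dyadicAverage f j x| :=
        abs_sub_le _ _ _
    _ ≤ K * 2 ^ (-((j + n : ℕ) : ℝ) * α) + ∑ i ∈ Finset.range n,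
          2 ^ (((j + i : ℕ) : ℝ) / 2) * |∫ t in Ico 0 1, f t * haar (j + i) ⌊2 ^ (j + i) * x⌋₊ t| :=
        add_le_add (hf.abs_sub_dyadicAverage_le hα hK _ hx)
          (abs_dyadicAverage_add_sub_le (hf.integrableOn hα hK) j n hx)
    _ ≤ K * 2 ^ (-((j + n : ℕ) : ℝ) * α) +
          ∑ _i ∈ Finset.range n, 2 ^ (((j + n : ℕ) : ℝ) / 2) * S := by
        gcongr with i hi
        · exact one_le_two
        · exact_mod_cast (Finset.mem_range.1 hi).le
        · exact hS _ (Nat.le_add_right j i) _ (floor_two_pow_mul_lt hx)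
    _ = K * 2 ^ (-((j + n : ℕ) : ℝ) * α) + n * (2 ^ (((j + n : ℕ) : ℝ) / 2) * S) := by
        rw [Finset.sum_const, Finset.card_range, nsmul_eq_mul]

end MemHolderClass

lemma le_iSup_fin_two_pow {g : (l : ℕ) → Fin (2 ^ l) → ℝ} {B : ℝ} (hB : ∀ l k, g l k ≤ B)
    {j l : ℕ} (hl : j ≤ l) (k : Fin (2 ^ l)) :
    g l k ≤ ⨆ (l : ℕ) (_ : j ≤ l) (k : Fin (2 ^ l)), g l k := by
  have hbdd : ∀ l, ⨆ (_ : j ≤ l) (k : Fin (2 ^ l)), g l k ≤ max B 0 := fun l ↦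
    Real.iSup_le (fun _ ↦ Real.iSup_le (fun k ↦ (hB l k).trans (le_max_left _ _))
      (le_max_right _ _)) (le_max_right _ _)
  calc g l k ≤ ⨆ k, g l k := le_ciSup (Finite.bddAbove_range _) k
    _ = ⨆ (_ : j ≤ l) (k : Fin (2 ^ l)), g l k := (ciSup_pos (f := fun _ ↦ ⨆ k, g l k) hl).symm
    _ ≤ _ := le_ciSup (f := fun l ↦ ⨆ (_ : j ≤ l) (k : Fin (2 ^ l)), g l k)
        ⟨max B 0, Set.forall_mem_range.2 hbdd⟩ l

lemma exists_one_le_mul_two_rpow_neg_lt {α : ℝ} (hα : 0 < α) (K : ℝ) {ε : ℝ} (hε : 0 < ε) :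
    ∃ M : ℕ, 1 ≤ M ∧ K * (2 : ℝ) ^ (-(M : ℝ) * α) < ε := by
  have hlim : Tendsto (fun M : ℕ ↦ K * ((2 : ℝ) ^ (-α)) ^ M) atTop (𝓝 0) := by
    simpa using (tendsto_pow_atTop_nhds_zero_of_lt_one (by positivity)
      (Real.rpow_lt_one_of_one_lt_of_neg one_lt_two (neg_lt_zero.2 hα))).const_mul K
  obtain ⟨M, hM, hMε⟩ := ((eventually_ge_atTop 1).and (hlim.eventually (gt_mem_nhds hε))).exists
  refine ⟨M, hM, lt_of_eq_of_lt ?_ hMε⟩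
  rw [← Real.rpow_natCast, ← Real.rpow_mul zero_le_two, neg_mul, neg_mul, mul_comm α]

theorem stmt_7_general (α K η : ℝ) (hα : 0 < α) (hK : 0 < K) (hη : 0 < η) :
    ∃ C > 0, ∀ (j₀ : ℕ) (f : ℝ → ℝ),
      (∀ x ∈ Set.Ico (0 : ℝ) 1, ∀ y ∈ Set.Ico (0 : ℝ) 1, |f x - f y| ≤ K * |x - y| ^ α) →
      (∀ j : ℕ, j₀ ≤ j →
        η * 2 ^ (-(j : ℝ) * α) ≤
          ⨆ x : Set.Ico (0 : ℝ) 1,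
            |f x - 2 ^ j * ∫ t in dyadicI j ⌊2 ^ j * (x : ℝ)⌋₊, f t|) →
      ∀ j : ℕ, j₀ ≤ j →
        C * 2 ^ (-(j : ℝ) * (α + 1 / 2)) ≤
          ⨆ (l : ℕ) (_ : j ≤ l) (k : Fin (2 ^ l)),
            |∫ t in Set.Ico (0 : ℝ) 1, f t * haar l (k : ℕ) t| := by
  obtain ⟨M, hM, hMK⟩ := exists_one_le_mul_two_rpow_neg_lt hα K (half_pos hη)
  refine ⟨η / (2 * M * 2 ^ ((M : ℝ) / 2)), by positivity, fun j₀ f hf hself j hj ↦ ?_⟩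
  set S := ⨆ (l : ℕ) (_ : j ≤ l) (k : Fin (2 ^ l)),
    |∫ t in Set.Ico (0 : ℝ) 1, f t * haar l (k : ℕ) t|
  have hS : ∀ l, j ≤ l → ∀ k < 2 ^ l, |∫ t in Ico 0 1, f t * haar l k t| ≤ S := fun l hl k hk ↦
    le_iSup_fin_two_pow (g := fun l k ↦ |∫ t in Ico 0 1, f t * haar l k t|)
      (fun _ k ↦ MemHolderClass.abs_integral_mul_haar_le hf hα hK.le k.isLt) hl ⟨k, hk⟩
  have hbound := (hself j hj).trans
    (ciSup_le fun x ↦ MemHolderClass.abs_sub_dyadicAverage_le_of_haar_le hf hα hK.le hS M x.2)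
  simp only [Nat.cast_add, neg_add, add_mul, add_div, Real.rpow_add two_pos] at hbound
  rw [mul_add, Real.rpow_add two_pos, show -(j : ℝ) * (1 / 2) = -((j : ℝ) / 2) by ring,
    Real.rpow_neg zero_le_two]
  have hhalf : η / 2 * 2 ^ (-(j : ℝ) * α) ≤ M * (2 ^ ((j : ℝ) / 2) * 2 ^ ((M : ℝ) / 2) * S) := by
    nlinarith [(by positivity : (0 : ℝ) < 2 ^ (-(j : ℝ) * α))]
  calc η / (2 * M * 2 ^ ((M : ℝ) / 2)) * (2 ^ (-(j : ℝ) * α) * (2 ^ ((j : ℝ) / 2))⁻¹)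
      = η / 2 * 2 ^ (-(j : ℝ) * α) / (M * 2 ^ ((j : ℝ) / 2) * 2 ^ ((M : ℝ) / 2)) := by
        field_simp
    _ ≤ S := by
        rw [div_le_iff₀ (by positivity)]
        linarith

/-- Let `0 < α ≤ 1`, `K > 0`, `η > 0`. There is `C > 0`, depending only on
`α, K, η`, such that: for every `j₀` and every self-similar `f ∈ Σ(α,K)` (i.e. for all
`j ≥ j₀`, `sup_{x ∈ [0,1)} |f(x) - 2^j ∫_{I_{j,⌊2^j x⌋}} f| ≥ η 2^{-jα}`), one has for all
`j ≥ j₀` that `sup_{(l,k), l ≥ j, k < 2^l} |∫₀¹ f ψ_{l,k}| ≥ C 2^{-j(α+1/2)}`. -/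
theorem stmt_7 (α K η : ℝ) (hα : 0 < α) (hα1 : α ≤ 1) (hK : 0 < K) (hη : 0 < η) :
    ∃ C > 0, ∀ (j₀ : ℕ) (f : ℝ → ℝ),
      (∀ x ∈ Set.Ico (0 : ℝ) 1, ∀ y ∈ Set.Ico (0 : ℝ) 1, |f x - f y| ≤ K * |x - y| ^ α) →
      (∀ j : ℕ, j₀ ≤ j →
        η * 2 ^ (-(j : ℝ) * α) ≤
          ⨆ x : Set.Ico (0 : ℝ) 1,
            |f x - 2 ^ j * ∫ t in dyadicI j ⌊2 ^ j * (x : ℝ)⌋₊, f t|) →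
      ∀ j : ℕ, j₀ ≤ j →
        C * 2 ^ (-(j : ℝ) * (α + 1 / 2)) ≤
          ⨆ (l : ℕ) (_ : j ≤ l) (k : Fin (2 ^ l)),
            |∫ t in Set.Ico (0 : ℝ) 1, f t * haar l (k : ℕ) t| :=
  stmt_7_general α K η hα hK hη
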